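/- Let m, r be positive integers with 1 ≤ r < m, and let h, k be integers with 0 ≤ h < k and gcd(h,k) = 1. Suppose λ*_{m,r}(h,k) = 0, i.e. gcd(m,k) divides rh. Then the rational number ς := (r·gcd(m,k) + r·ℏ_m(h,k)·m·h)/(m·k) is not an integer, and moreover |1 − e^{2πi/m}| ≤ |1 − e^{2πiς}| ≤ 2. -/

import Mathlib

open Complex

noncomputable section

/-- `λ_{m,r}(h,k) := ⌈rh/gcd(m,k)⌉` (with the convention `gcd(0,n) = n`). -/
def lamF (m r h k : ℕ) : ℤ := ⌈(r * h : ℚ) / (Nat.gcd m k : ℚ)⌉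

/-- `λ*_{m,r}(h,k) := λ_{m,r}(h,k) − rh/gcd(m,k)`. -/
def lamStar (m r h k : ℕ) : ℚ := (lamF m r h k : ℚ) - (r * h : ℚ) / (Nat.gcd m k : ℚ)

/-!
Let `d = gcd(m, k)`. As `h` is coprime to `d`, `λ* = 0` (i.e. `d ∣ rh`) forces `d ∣ r`. Writing
`1 + ℏ(m/d)h = (k/d)t`, the numerator of `ς` is `rkt`, so `ς = rt/m = (r/d)t/(m/d)`, where `t` is
coprime to `m/d` and `0 < r/d < m/d`; hence `ς ∉ ℤ`. Reducing `rt` modulo `m` gives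
`e^{2πiς} = e^{2πic/m}` with `0 < c < m`, and `|1 - e^{iθ}| = 2|sin(θ/2)|` together with the
concavity of `sin` on `[0, π]` yields `|1 - e^{2πi/m}| ≤ |1 - e^{2πiς}|`.
-/

open Real

theorem Real.sin_le_sin_of_mem_Icc_sub {a x : ℝ} (ha : 0 ≤ a) (hx : x ∈ Set.Icc a (π - a)) :
    Real.sin a ≤ Real.sin x := by
  have hpi : a ≤ π := by linarith [hx.1.trans hx.2]
  have hmin := strictConcaveOn_sin_Icc.concaveOn.min_le_of_mem_Icc ⟨ha, hpi⟩
    ⟨by linarith, by linarith⟩ hx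
  rwa [Real.sin_pi_sub, min_self] at hmin

theorem Complex.norm_one_sub_exp_ofReal_mul_I (x : ℝ) :
    ‖1 - exp (x * I)‖ = 2 * |Real.sin (x / 2)| := by
  rw [norm_sub_rev, mul_comm, norm_exp_I_mul_ofReal_sub_one, norm_mul, Real.norm_two,
    Real.norm_eq_abs]

theorem Complex.norm_one_sub_exp_two_pi_I_mul_le_two (x : ℝ) :
    ‖1 - exp (2 * π * I * x)‖ ≤ 2 := by
  rw [show 2 * π * I * x = ((2 * π * x : ℝ) : ℂ) * I by push_cast; ring,
    norm_one_sub_exp_ofReal_mul_I]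
  linarith [Real.abs_sin_le_one (2 * π * x / 2)]

theorem Complex.norm_one_sub_exp_two_pi_I_div_le {m : ℕ} {c : ℤ} (hc : 0 < c) (hcm : c < m) :
    ‖1 - exp (2 * π * I / m)‖ ≤ ‖1 - exp (2 * π * I * (c / m))‖ := by
  have hc : (1 : ℝ) ≤ c := by exact_mod_cast hc
  have hcm : (c : ℝ) + 1 ≤ m := by exact_mod_cast hcm
  have hm : (0 : ℝ) < m := by linarith
  rw [show 2 * π * I / m = ((2 * π / m : ℝ) : ℂ) * I by push_cast; ring,
    show 2 * π * I * (c / m) = ((2 * π * (c / m) : ℝ) : ℂ) * I by push_cast; ring,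
    norm_one_sub_exp_ofReal_mul_I, norm_one_sub_exp_ofReal_mul_I,
    show 2 * π / m / 2 = π / m by ring, show 2 * π * (c / m) / 2 = π * c / m by ring]
  have hsin : Real.sin (π / m) ≤ Real.sin (π * c / m) := by
    refine Real.sin_le_sin_of_mem_Icc_sub (by positivity) ⟨?_, ?_⟩
    · gcongr; exact le_mul_of_one_le_right pi_pos.le hc
    · rw [div_le_iff₀ hm]; field_simp; nlinarith [pi_pos]
  have hsin0 : 0 ≤ Real.sin (π / m) :=
    sin_nonneg_of_nonneg_of_le_pi (by positivity) (by rw [div_le_iff₀ hm]; nlinarith [pi_pos])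
  rw [abs_of_nonneg hsin0, abs_of_nonneg (hsin0.trans hsin)]
  linarith

theorem Complex.exp_two_pi_I_mul_div_emod (N m : ℤ) :
    exp (2 * π * I * (N / m)) = exp (2 * π * I * ((N % m : ℤ) / m)) := by
  rcases eq_or_ne m 0 with rfl | hm
  · simp
  rw [exp_eq_exp_iff_exists_int]
  refine ⟨N / m, ?_⟩
  have hdiv : (N : ℂ) = (N % m : ℤ) + m * (N / m : ℤ) := by
    exact_mod_cast (Int.emod_add_mul_ediv N m).symm
  field_simp
  rw [hdiv]

theorem Complex.norm_one_sub_exp_two_pi_I_div_le_of_not_dvd {m : ℕ} {N : ℤ} (hN : ¬ (m : ℤ) ∣ N) :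
    ‖1 - exp (2 * π * I / m)‖ ≤ ‖1 - exp (2 * π * I * (N / m))‖ := by
  rcases Nat.eq_zero_or_pos m with rfl | hm
  · simp
  have hm : (0 : ℤ) < m := by exact_mod_cast hm
  have hc : N % m ≠ 0 := fun h0 => hN (Int.dvd_of_emod_eq_zero h0)
  have hperiod := exp_two_pi_I_mul_div_emod N m
  push_cast at hperiod
  rw [hperiod]
  exact norm_one_sub_exp_two_pi_I_div_le (lt_of_le_of_ne (Int.emod_nonneg N hm.ne') (Ne.symm hc))
    (Int.emod_lt_of_pos N hm)

theorem gcd_dvd_mul_of_lamStar_eq_zero {m r h k : ℕ} (hk : 0 < k) (hls : lamStar m r h k = 0) :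
    Nat.gcd m k ∣ r * h := by
  have hd : (Nat.gcd m k : ℚ) ≠ 0 := by exact_mod_cast (Nat.gcd_pos_of_pos_right m hk).ne'
  rw [lamStar, sub_eq_zero, eq_div_iff hd] at hls
  have hrh : ((r * h : ℕ) : ℤ) = lamF m r h k * Nat.gcd m k := by
    exact_mod_cast hls.symm
  exact Int.natCast_dvd_natCast.mp ⟨_, hrh.trans (mul_comm _ _)⟩

theorem Int.not_dvd_mul_of_isCoprime {a u t : ℤ} (hat : IsCoprime a t) (hu : 0 < u) (hua : u < a) :
    ¬ a ∣ u * t :=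
  fun hdvd => (Int.le_of_dvd hu (hat.dvd_of_dvd_mul_right hdvd)).not_gt hua

theorem exists_int_not_dvd_of_lamStar_eq_zero {m r h k : ℕ} (hr : 1 ≤ r) (hrm : r < m)
    (hk : 0 < k) (hcop : Nat.gcd h k = 1) (hls : lamStar m r h k = 0) {ℏ : ℤ}
    (hcong : ℏ * (((m / Nat.gcd m k) * h : ℕ) : ℤ) ≡ -1 [ZMOD ((k / Nat.gcd m k : ℕ) : ℤ)]) :
    ∃ N : ℤ, ¬ (m : ℤ) ∣ N ∧
      ((r : ℚ) * Nat.gcd m k + r * ℏ * m * h) / (m * k) = N / m := by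
  set d := Nat.gcd m k
  have hd : 0 < d := Nat.gcd_pos_of_pos_right m hk
  obtain ⟨u, rfl⟩ : d ∣ r := (Nat.Coprime.coprime_dvd_right (Nat.gcd_dvd_right m k) hcop).symm
    |>.dvd_of_dvd_mul_right (gcd_dvd_mul_of_lamStar_eq_zero hk hls)
  obtain ⟨m', hm'⟩ : d ∣ m := Nat.gcd_dvd_left m k
  obtain ⟨k', hk'⟩ : d ∣ k := Nat.gcd_dvd_right m k
  rw [hm', hk', Nat.mul_div_cancel_left _ hd, Nat.mul_div_cancel_left _ hd] at hcong
  obtain ⟨s, hs⟩ := Int.modEq_iff_dvd.mp hcong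
  have hu : 0 < u := Nat.pos_of_mul_pos_left hr
  have hum : u < m' := Nat.lt_of_mul_lt_mul_left (hm' ▸ hrm)
  have hm'k' : IsCoprime (m' : ℤ) (-s) := ⟨-(ℏ * h), k', by push_cast at hs; linear_combination hs⟩
  refine ⟨(d * u : ℕ) * -s, fun hdvd => ?_, ?_⟩
  · rw [hm', Nat.cast_mul, Nat.cast_mul, mul_assoc, mul_dvd_mul_iff_left (by positivity)] at hdvd
    exact Int.not_dvd_mul_of_isCoprime hm'k' (by exact_mod_cast hu) (by exact_mod_cast hum) hdvd
  · have hsQ : (-1 - ℏ * (m' * h) : ℚ) = k' * s := by exact_mod_cast hs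
    have hm'0 : (m' : ℚ) ≠ 0 := by exact_mod_cast (hu.trans hum).ne'
    have hk'0 : (k' : ℚ) ≠ 0 := by exact_mod_cast (Nat.pos_of_mul_pos_left (hk' ▸ hk)).ne'
    rw [hm', hk']
    push_cast
    field_simp
    linear_combination -hsQ

theorem sigma_not_int_and_abs_bounds_general (m r h k : ℕ) (hr : 1 ≤ r) (hrm : r < m)
    (hhk : h < k) (hcop : Nat.gcd h k = 1) (hls : lamStar m r h k = 0) (ℏ : ℤ)
    (hcong : ℏ * (((m / Nat.gcd m k) * h : ℕ) : ℤ) ≡ -1 [ZMOD ((k / Nat.gcd m k : ℕ) : ℤ)])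
    (ς : ℚ)
    (hς : ς = ((r : ℚ) * (Nat.gcd m k : ℚ) + (r : ℚ) * (ℏ : ℚ) * (m : ℚ) * (h : ℚ)) /
      ((m : ℚ) * (k : ℚ))) :
    (¬ ∃ z : ℤ, ς = (z : ℚ)) ∧
      ‖1 - Complex.exp (2 * (Real.pi : ℂ) * Complex.I / (m : ℂ))‖ ≤
        ‖1 - Complex.exp (2 * (Real.pi : ℂ) * Complex.I * (ς : ℂ))‖ ∧
      ‖1 - Complex.exp (2 * (Real.pi : ℂ) * Complex.I * (ς : ℂ))‖ ≤ 2 := by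
  have hm : (m : ℚ) ≠ 0 := by exact_mod_cast (Nat.zero_lt_of_lt hrm).ne'
  obtain ⟨N, hN, hNς⟩ := exists_int_not_dvd_of_lamStar_eq_zero hr hrm (h.zero_le.trans_lt hhk)
    hcop hls hcong
  refine ⟨?_, ?_, by simpa using norm_one_sub_exp_two_pi_I_mul_le_two ς⟩
  · rintro ⟨z, hz⟩
    rw [hς, hNς, div_eq_iff hm] at hz
    exact hN ⟨z, by rw [mul_comm]; exact_mod_cast hz⟩
  · rw [hς, hNς]
    push_cast
    exact norm_one_sub_exp_two_pi_I_div_le_of_not_dvd hN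

/-- Let `m, r` be positive integers with `1 ≤ r < m`, and let `h, k` be
integers with `0 ≤ h < k` and `gcd(h,k) = 1`. Suppose `λ*_{m,r}(h,k) = 0`, i.e. `gcd(m,k)`
divides `rh`. Then the rational number `ς := (r·gcd(m,k) + r·ℏ_m(h,k)·m·h)/(m·k)` is not an
integer, and moreover `|1 − e^{2πi/m}| ≤ |1 − e^{2πiς}| ≤ 2`. -/
theorem sigma_not_int_and_abs_bounds (m r h k : ℕ) (hm : 1 ≤ m) (hr : 1 ≤ r) (hrm : r < m)
    (hhk : h < k) (hcop : Nat.gcd h k = 1) (hls : lamStar m r h k = 0) (ℏ : ℤ)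
    (hcong : ℏ * (((m / Nat.gcd m k) * h : ℕ) : ℤ) ≡ -1 [ZMOD ((k / Nat.gcd m k : ℕ) : ℤ)])
    (ς : ℚ)
    (hς : ς = ((r : ℚ) * (Nat.gcd m k : ℚ) + (r : ℚ) * (ℏ : ℚ) * (m : ℚ) * (h : ℚ)) /
      ((m : ℚ) * (k : ℚ))) :
    (¬ ∃ z : ℤ, ς = (z : ℚ)) ∧
      ‖1 - Complex.exp (2 * (Real.pi : ℂ) * Complex.I / (m : ℂ))‖ ≤
        ‖1 - Complex.exp (2 * (Real.pi : ℂ) * Complex.I * (ς : ℂ))‖ ∧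
      ‖1 - Complex.exp (2 * (Real.pi : ℂ) * Complex.I * (ς : ℂ))‖ ≤ 2 :=
  sigma_not_int_and_abs_bounds_general m r h k hr hrm hhk hcop hls ℏ hcong ς hς
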